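/- Let Γ = E ×_{σ,χ} B be a finite group with E an abelian minimal normal subgroup and B = Γ/E, and let G be a finitely generated group. Then |Epi(G,Γ)| = Σ_{ρ ∈ Epi(G,B)} ( ε_χ(ρ) · |Z¹_{σρ}(G,E)| − c ), where c is the number of complements of E in Γ and ε_χ(ρ) ∈ {0,1} records whether ρ lifts to Γ. -/

import Mathlib

/-- The underlying type of the extension `A ×_{σ,χ} B` of a group `B` by an abelian
group `A`, with monodromy `σ : B → Aut(A)` and `2`-cocycle `χ : B × B → A`. -/
@[ext] structure CocycleExtension {A B : Type*} [AddCommGroup A] [Group B]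
    (σ : B →* Multiplicative (AddAut A)) (χ : B → B → A) where
  fst : A
  snd : B

/-- `χ` is a normalized `2`-cocycle for the action `σ`. -/
class IsNormalizedCocycle {A B : Type*} [AddCommGroup A] [Group B]
    (σ : B →* Multiplicative (AddAut A)) (χ : B → B → A) : Prop where
  cocycle : ∀ b₁ b₂ b₃ : B,
    χ b₁ b₂ + χ (b₁ * b₂) b₃ = σ b₁ (χ b₂ b₃) + χ b₁ (b₂ * b₃)
  one_left : ∀ b : B, χ 1 b = 0
  one_right : ∀ b : B, χ b 1 = 0

namespace CocycleExtension

variable {A B : Type*} [AddCommGroup A] [Group B]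
  (σ : B →* Multiplicative (AddAut A)) (χ : B → B → A) [h : IsNormalizedCocycle σ χ]

/-- The group `A ×_{σ,χ} B`, with multiplication
`(a₁,b₁)(a₂,b₂) = (a₁ + σ_{b₁}(a₂) + χ(b₁,b₂), b₁b₂)`. -/
instance : Group (CocycleExtension σ χ) where
  mul p q := ⟨p.fst + σ p.snd q.fst + χ p.snd q.snd, p.snd * q.snd⟩
  one := ⟨0, 1⟩
  inv p := ⟨-(σ p.snd⁻¹ p.fst) - χ p.snd⁻¹ p.snd, p.snd⁻¹⟩
  mul_assoc p q r := by
    have key := h.cocycle p.snd q.snd r.snd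
    ext
    · show p.fst + σ p.snd q.fst + χ p.snd q.snd + σ (p.snd * q.snd) r.fst
          + χ (p.snd * q.snd) r.snd
        = p.fst + σ p.snd (q.fst + σ q.snd r.fst + χ q.snd r.snd)
          + χ p.snd (q.snd * r.snd)
      calc p.fst + σ p.snd q.fst + χ p.snd q.snd + σ (p.snd * q.snd) r.fst
            + χ (p.snd * q.snd) r.snd
          = p.fst + σ p.snd q.fst + σ p.snd (σ q.snd r.fst)
            + (χ p.snd q.snd + χ (p.snd * q.snd) r.snd) := by
            have hm : σ (p.snd * q.snd) r.fst = σ p.snd (σ q.snd r.fst) := by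
              rw [map_mul]; rfl
            rw [hm]; abel
        _ = p.fst + σ p.snd q.fst + σ p.snd (σ q.snd r.fst)
            + (σ p.snd (χ q.snd r.snd) + χ p.snd (q.snd * r.snd)) := by rw [key]
        _ = p.fst + σ p.snd (q.fst + σ q.snd r.fst + χ q.snd r.snd)
            + χ p.snd (q.snd * r.snd) := by
            simp only [map_add]; abel
    · show p.snd * q.snd * r.snd = p.snd * (q.snd * r.snd)
      exact mul_assoc _ _ _
  one_mul p := by
    ext
    · show 0 + σ 1 p.fst + χ 1 p.snd = p.fst
      simp [h.one_left]
    · show 1 * p.snd = p.snd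
      exact one_mul _
  mul_one p := by
    ext
    · show p.fst + σ p.snd 0 + χ p.snd 1 = p.fst
      simp [h.one_right]
    · show p.snd * 1 = p.snd
      exact mul_one _
  inv_mul_cancel p := by
    ext
    · show -(σ p.snd⁻¹ p.fst) - χ p.snd⁻¹ p.snd + σ p.snd⁻¹ p.fst + χ p.snd⁻¹ p.snd = 0
      abel
    · show p.snd⁻¹ * p.snd = 1
      exact inv_mul_cancel _

/-- The canonical projection `A ×_{σ,χ} B → B`. -/
def proj : CocycleExtension σ χ →* B where
  toFun p := p.snd
  map_one' := rfl
  map_mul' _ _ := rfl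

end CocycleExtension

/-!
Epimorphisms `G → Γ` are counted fibrewise over their images `ρ` in `Epi(G, B)`. The lifts of `ρ`
are the maps `g ↦ (f g, ρ g)` with `δ¹f = -ρ*χ`, so they are either absent or a torsor under
`Z¹_{σρ}(G, E)`. A lift that is not surjective has an image `U` with `UE = Γ`, and `U ∩ E` is then
normal in `Γ`, so minimality of `E` forces `U ∩ E = 1`: `U` is a complement. Conversely, the
projection `Γ → B` restricts to an isomorphism `U ≅ B` on every complement, so each complement
is the image of exactly one lift of `ρ`.
-/

theorem Nat.card_eq_finsum_card_fiber {α β : Type*} [Finite α] [Finite β] (f : α → β) :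
    Nat.card α = ∑ᶠ b, Nat.card {a // f a = b} := by
  have := Fintype.ofFinite β
  rw [finsum_eq_sum_of_fintype, ← Nat.card_sigma, Nat.card_congr (Equiv.sigmaFiberEquiv f)]

theorem Nat.card_subtype_and_add_card_subtype_and_not {α : Type*} [Finite α] (p q : α → Prop) :
    Nat.card {x // p x ∧ q x} + Nat.card {x // p x ∧ ¬ q x} = Nat.card {x // p x} := by
  classical
  rw [← Nat.card_sum]
  exact Nat.card_congr <|
    ((Equiv.subtypeSubtypeEquivSubtypeInter p q).symm.sumCongr
      (Equiv.subtypeSubtypeEquivSubtypeInter p (¬ q ·)).symm).trans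
    (Equiv.sumCompl fun x : {x // p x} => q x)

instance MonoidHom.finite_of_fg {G H : Type*} [Group G] [Group.FG G] [Group H] [Finite H] :
    Finite (G →* H) := by
  obtain ⟨S, hS, hSfin⟩ := Group.fg_iff.mp ‹Group.FG G›
  have := hSfin.to_subtype
  exact Finite.of_injective (fun f : G →* H => fun s : S => f s) fun f g hfg =>
    MonoidHom.eq_of_eqOn_dense hS fun x hx => congrFun hfg ⟨x, hx⟩

namespace Subgroup

variable {Γ : Type*} [Group Γ] {U K : Subgroup Γ} [K.Normal] [IsMulCommutative K]

/-- `U ⊓ K` is normalized by `U` because `K` is normal, and centralized by the abelian `K`. -/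
theorem normal_inf_of_codisjoint (hUK : Codisjoint U K) : (U ⊓ K).Normal := by
  rw [← normalizer_eq_top_iff, eq_top_iff, ← codisjoint_iff.mp hUK]
  refine sup_le ((le_inf le_normalizer le_normalizer_of_normal).trans
    inf_normalizer_le_normalizer_inf) ?_
  exact (le_centralizer_iff_isMulCommutative.mpr ‹_›).trans <|
    (centralizer_le fun _ hx => hx.2).trans (centralizer_le_normalizer _)

theorem isCompl_of_codisjoint_of_ne_top
    (hmin : ∀ N : Subgroup Γ, N.Normal → N ≤ K → N = ⊥ ∨ N = K)
    (hUK : Codisjoint U K) (hU : U ≠ ⊤) : IsCompl U K := by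
  refine ⟨?_, hUK⟩
  rcases hmin _ (normal_inf_of_codisjoint hUK) inf_le_right with h | h
  · exact disjoint_iff.mpr h
  · refine absurd ?_ hU
    rw [← codisjoint_iff.mp hUK]
    exact (sup_eq_left.mpr (inf_eq_right.mp h)).symm

end Subgroup

namespace MonoidHom

variable {G Γ B : Type*} [Group G] [Group Γ] [Group B]

section
variable (π : Γ →* B)

theorem codisjoint_range_ker_of_surjective_comp {F : G →* Γ}
    (hF : Function.Surjective (π.comp F)) : Codisjoint F.range π.ker := by
  rw [codisjoint_iff, ← Subgroup.comap_map_eq, ← range_comp, range_eq_top.mpr hF,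
    Subgroup.comap_top]

variable (hπ : Function.Surjective π) {U : Subgroup Γ} (hU : IsCompl U π.ker)

noncomputable def mulEquivOfIsCompl : U ≃* B :=
  MulEquiv.ofBijective (π.domRestrict U)
    ⟨by rw [← ker_eq_bot_iff, ker_domRestrict, Subgroup.subgroupOf_eq_bot]
        exact hU.disjoint.symm,
      by rw [← range_eq_top, domRestrict_range, Subgroup.map_eq_range_iff.mpr hU.codisjoint,
          range_eq_top.mpr hπ]⟩

noncomputable def liftOfIsCompl (ρ : G →* B) : G →* Γ :=
  U.subtype.comp ((π.mulEquivOfIsCompl hπ hU).symm.toMonoidHom.comp ρ)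

theorem comp_liftOfIsCompl (ρ : G →* B) : π.comp (π.liftOfIsCompl hπ hU ρ) = ρ :=
  MonoidHom.ext fun g => (π.mulEquivOfIsCompl hπ hU).apply_symm_apply (ρ g)

theorem range_liftOfIsCompl {ρ : G →* B} (hρ : Function.Surjective ρ) :
    (π.liftOfIsCompl hπ hU ρ).range = U := by
  rw [liftOfIsCompl, range_comp,
    range_eq_top.mpr ((π.mulEquivOfIsCompl hπ hU).symm.surjective.comp hρ),
    ← range_eq_map, Subgroup.range_subtype]

theorem eq_liftOfIsCompl {ρ : G →* B} {F : G →* Γ} (hF : π.comp F = ρ) (hFU : F.range ≤ U) :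
    F = π.liftOfIsCompl hπ hU ρ := by
  ext g
  have h : π.mulEquivOfIsCompl hπ hU ⟨F g, hFU ⟨g, rfl⟩⟩ = ρ g := DFunLike.congr_fun hF g
  exact congrArg Subtype.val ((MulEquiv.eq_symm_apply _).mpr h)

end

variable {π : Γ →* B}

theorem card_lifts_not_surjective [IsMulCommutative π.ker]
    (hπ : Function.Surjective π) (hne : π.ker ≠ ⊥)
    (hmin : ∀ N : Subgroup Γ, N.Normal → N ≤ π.ker → N = ⊥ ∨ N = π.ker)
    {ρ : G →* B} (hρ : Function.Surjective ρ) :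
    Nat.card {F : G →* Γ // π.comp F = ρ ∧ ¬ Function.Surjective F} =
      Nat.card {U : Subgroup Γ // IsCompl U π.ker} := by
  have hcompl (F : {F : G →* Γ // π.comp F = ρ ∧ ¬ Function.Surjective F}) :
      IsCompl F.1.range π.ker :=
    Subgroup.isCompl_of_codisjoint_of_ne_top hmin
      (π.codisjoint_range_ker_of_surjective_comp (by rwa [F.2.1])) (mt range_eq_top.mp F.2.2)
  refine Nat.card_eq_of_bijective (fun F => ⟨F.1.range, hcompl F⟩) ⟨?_, ?_⟩
  · rintro ⟨F₁, hF₁⟩ ⟨F₂, hF₂⟩ hrange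
    have hU := hcompl ⟨F₁, hF₁⟩
    have h₂ : F₂.range ≤ F₁.range := (congrArg Subtype.val hrange).ge
    exact Subtype.ext ((π.eq_liftOfIsCompl hπ hU hF₁.1 le_rfl).trans
      (π.eq_liftOfIsCompl hπ hU hF₂.1 h₂).symm)
  · rintro ⟨U, hU⟩
    have hrange := π.range_liftOfIsCompl hπ hU hρ
    refine ⟨⟨π.liftOfIsCompl hπ hU ρ, π.comp_liftOfIsCompl hπ hU ρ, fun hsurj => hne ?_⟩,
      Subtype.ext hrange⟩
    rw [← range_eq_top, hrange] at hsurj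
    exact top_disjoint.mp (hsurj ▸ hU.disjoint)

theorem card_lifts_surjective [Finite (G →* Γ)] [IsMulCommutative π.ker]
    (hπ : Function.Surjective π) (hne : π.ker ≠ ⊥)
    (hmin : ∀ N : Subgroup Γ, N.Normal → N ≤ π.ker → N = ⊥ ∨ N = π.ker)
    {ρ : G →* B} (hρ : Function.Surjective ρ) :
    Nat.card {F : G →* Γ // π.comp F = ρ ∧ Function.Surjective F} =
      Nat.card {F : G →* Γ // π.comp F = ρ} - Nat.card {U : Subgroup Γ // IsCompl U π.ker} := by
  rw [← card_lifts_not_surjective hπ hne hmin hρ,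
    ← Nat.card_subtype_and_add_card_subtype_and_not (π.comp · = ρ) (Function.Surjective ·),
    Nat.add_sub_cancel]

theorem card_surjective_eq_finsum [Finite (G →* Γ)] [Finite (G →* B)]
    (hπ : Function.Surjective π) :
    Nat.card {F : G →* Γ // Function.Surjective F} =
      ∑ᶠ ρ : {ρ : G →* B // Function.Surjective ρ},
        Nat.card {F : G →* Γ // π.comp F = ρ ∧ Function.Surjective F} := by
  rw [Nat.card_eq_finsum_card_fiber fun F : {F : G →* Γ // Function.Surjective F} =>
    (⟨π.comp F, hπ.comp F.2⟩ : {ρ : G →* B // Function.Surjective ρ})]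
  exact finsum_congr fun ρ => Nat.card_congr
    { toFun F := ⟨F.1.1, congrArg Subtype.val F.2, F.1.2⟩
      invFun F := ⟨⟨F.1, F.2.2⟩, Subtype.ext F.2.1⟩ }

end MonoidHom

namespace CocycleExtension

variable {E B G : Type*} [AddCommGroup E] [Group B] [Group G]
  (σ : B →* Multiplicative (AddAut E)) (χ : B → B → E)

/-- `Z¹_{σρ}(G, E)`. -/
def cocycles (ρ : G →* B) : Set (G → E) :=
  {f | ∀ g h, f (g * h) = f g + σ (ρ g) (f h)}

/-- The solutions of `δ¹f = -ρ*χ`. -/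
def twistedCocycles (ρ : G →* B) : Set (G → E) :=
  {f | ∀ g h, f (g * h) = f g + σ (ρ g) (f h) + χ (ρ g) (ρ h)}

instance [Finite E] [Finite B] : Finite (CocycleExtension σ χ) :=
  Finite.of_injective (fun p => (p.fst, p.snd)) fun _ _ h =>
    CocycleExtension.ext (congrArg Prod.fst h) (congrArg Prod.snd h)

def twistedCocyclesEquivCocycles {ρ : G →* B} {f₀ : G → E} (hf₀ : f₀ ∈ twistedCocycles σ χ ρ) :
    twistedCocycles σ χ ρ ≃ cocycles σ ρ where
  toFun f := ⟨f.1 - f₀, fun g h => by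
    simp only [Pi.sub_apply, f.2 g h, hf₀ g h, map_sub]
    abel⟩
  invFun c := ⟨c.1 + f₀, fun g h => by
    simp only [Pi.add_apply, c.2 g h, hf₀ g h, map_add]
    abel⟩
  left_inv f := Subtype.ext (sub_add_cancel f.1 f₀)
  right_inv c := Subtype.ext (add_sub_cancel_right c.1 f₀)

variable [IsNormalizedCocycle σ χ]

@[simp]
theorem mul_fst (p q : CocycleExtension σ χ) :
    (p * q).fst = p.fst + σ p.snd q.fst + χ p.snd q.snd := rfl

@[simp]
theorem mul_snd (p q : CocycleExtension σ χ) : (p * q).snd = p.snd * q.snd := rfl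

@[simp]
theorem one_fst : (1 : CocycleExtension σ χ).fst = 0 := rfl

theorem proj_surjective : Function.Surjective (proj σ χ) :=
  fun b => ⟨⟨0, b⟩, rfl⟩

instance : IsMulCommutative (proj σ χ).ker where
  is_comm := ⟨fun p q => by
    have hp : p.1.snd = 1 := p.2
    have hq : q.1.snd = 1 := q.2
    ext
    · simp only [Subgroup.coe_mul, mul_fst, hp, hq, map_one, toAdd_one, AddAut.zero_apply,
        IsNormalizedCocycle.one_left σ, add_zero, add_comm]
    · simp only [Subgroup.coe_mul, mul_snd, hp, hq]⟩

def liftsEquivTwistedCocycles (ρ : G →* B) :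
    {F : G →* CocycleExtension σ χ // (proj σ χ).comp F = ρ} ≃ twistedCocycles σ χ ρ where
  toFun F := ⟨fun g => (F.1 g).fst, fun g h => by
    have hsnd (g : G) : (F.1 g).snd = ρ g := DFunLike.congr_fun F.2 g
    simp only [map_mul, mul_fst, hsnd]⟩
  invFun f :=
    ⟨{ toFun g := ⟨f.1 g, ρ g⟩
       map_one' := by
        have h := f.2 1 1
        simp only [mul_one, map_one, IsNormalizedCocycle.one_left σ, add_zero] at h
        exact CocycleExtension.ext (by simpa using h) (map_one ρ)
       map_mul' g h := CocycleExtension.ext (f.2 g h) (map_mul ρ g h) }, rfl⟩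
  left_inv F := Subtype.ext <| MonoidHom.ext fun g =>
    CocycleExtension.ext rfl (DFunLike.congr_fun F.2 g).symm

open Classical in
theorem card_lifts (ρ : G →* B) :
    Nat.card {F : G →* CocycleExtension σ χ // (proj σ χ).comp F = ρ} =
      (if (twistedCocycles σ χ ρ).Nonempty then 1 else 0) * Nat.card (cocycles σ ρ) := by
  rw [Nat.card_congr (liftsEquivTwistedCocycles σ χ ρ)]
  split_ifs with h
  · obtain ⟨f₀, hf₀⟩ := h
    rw [one_mul]
    exact Nat.card_congr (twistedCocyclesEquivCocycles σ χ hf₀)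
  · rw [zero_mul, Set.not_nonempty_iff_eq_empty.mp h]
    exact Nat.card_of_isEmpty

end CocycleExtension

open Classical in
/-- Let `Γ = E ×_{σ,χ} B` be a finite group with `E` (realized as the kernel of the
projection `π : Γ → B`) an abelian minimal normal subgroup, and let `G` be a finitely
generated group.  Then
`|Epi(G,Γ)| = ∑_{ρ ∈ Epi(G,B)} (ε_χ(ρ) ⬝ |Z¹_{σρ}(G,E)| - c)`,
where `c` is the number of complements of `E` in `Γ` and `ε_χ(ρ) ∈ {0,1}` records whether
the `2`-cocycle `-ρ*χ` is a coboundary, i.e. whether `ρ` lifts to `Γ`. -/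
theorem card_epi_cocycleExtension
    {E B : Type*} [AddCommGroup E] [Finite E] [Group B] [Finite B]
    (σ : B →* Multiplicative (AddAut E)) (χ : B → B → E) [IsNormalizedCocycle σ χ]
    (hne : (CocycleExtension.proj σ χ).ker ≠ ⊥)
    (hmin : ∀ N : Subgroup (CocycleExtension σ χ), N.Normal →
      N ≤ (CocycleExtension.proj σ χ).ker → N = ⊥ ∨ N = (CocycleExtension.proj σ χ).ker)
    (G : Type*) [Group G] [Group.FG G] :
    Nat.card {ρ : G →* CocycleExtension σ χ // Function.Surjective ρ} =
      ∑ᶠ ρ : {ρ : G →* B // Function.Surjective ρ},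
        ((if ∃ f : G → E, ∀ g h : G,
            f (g * h) = f g + σ (ρ.1 g) (f h) + χ (ρ.1 g) (ρ.1 h) then 1 else 0) *
          Nat.card {f : G → E // ∀ g h : G, f (g * h) = f g + σ (ρ.1 g) (f h)} -
        Nat.card {U : Subgroup (CocycleExtension σ χ) //
          U ⊓ (CocycleExtension.proj σ χ).ker = ⊥ ∧
            U ⊔ (CocycleExtension.proj σ χ).ker = ⊤}) := by
  have hπ := CocycleExtension.proj_surjective σ χ
  rw [MonoidHom.card_surjective_eq_finsum hπ]
  refine finsum_congr fun ρ => ?_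
  rw [MonoidHom.card_lifts_surjective hπ hne hmin ρ.2, CocycleExtension.card_lifts]
  simp only [isCompl_iff, disjoint_iff, codisjoint_iff]
  rfl
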